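/- Let ρ(ω) = ω^{-α} 1_{ω<1} + ω^{-β} 1_{ω>1} with 0 ≤ α < 5/4 and β > 1. Then the flux integral J₃(ρ)(1) = ∫_{ω₁>0, ω₂>1, 0<ω₃<1, ω₁+ω₂=ω₃+ω₄} √ω₁ · W · ρ(ω₁)ρ(ω₂)ρ(ω₃) dω₁ dω₂ dω₃ is finite, where W = min(√ω₁,√ω₂,√ω₃,√ω₄)/√ω₁ and ω₄ = ω₁+ω₂−ω₃. -/

import Mathlib

/-!
On the region of integration, `√ω₁ · W = min(√ω₁, √ω₂, √ω₃, √ω₄) ≤ min(√ω₁, √ω₃)`, and since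
`ω₃ < 1` this is at most `min(ω₁^{1/4}, 1) · ω₃^{1/4}`. Hence the integrand is dominated by the
product of three one-variable functions: `min(ω₁^{1/4}, 1) ρ(ω₁)` on `(0, ∞)`, `ρ(ω₂)` on
`(1, ∞)` and `ω₃^{1/4} ρ(ω₃)` on `(0, 1)`. Each is integrable, since near `0` they behave like
`ω^{1/4 - α}` with `α - 1/4 < 1`, and near `∞` like `ω^{-β}` with `β > 1`.
-/

open MeasureTheory Set

/-- The interaction weight W = min(√ω₁,√ω₂,√ω₃,√ω₄)/√ω₁. -/
noncomputable def W (a b c d : ℝ) : ℝ :=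
  min (min (Real.sqrt a) (Real.sqrt b)) (min (Real.sqrt c) (Real.sqrt d)) / Real.sqrt a

noncomputable def powerWeight (α β x : ℝ) : ℝ :=
  if x < 1 then x ^ (-α) else x ^ (-β)

lemma measurable_powerWeight (α β : ℝ) : Measurable (powerWeight α β) :=
  Measurable.ite (measurableSet_lt measurable_id measurable_const) (by fun_prop) (by fun_prop)

lemma powerWeight_nonneg (α β : ℝ) {x : ℝ} (hx : 0 ≤ x) : 0 ≤ powerWeight α β x := by
  unfold powerWeight
  split <;> exact Real.rpow_nonneg hx _

lemma integrableOn_Ici_powerWeight (α : ℝ) {β : ℝ} (hβ : 1 < β) :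
    IntegrableOn (powerWeight α β) (Ici 1) := by
  rw [integrableOn_Ici_iff_integrableOn_Ioi]
  refine (integrableOn_Ioi_rpow_of_lt (neg_lt_neg hβ) one_pos).congr_fun (fun x hx => ?_)
    measurableSet_Ioi
  rw [powerWeight, if_neg (not_lt.2 (le_of_lt hx))]

lemma integrableOn_Ioo_rpow_mul_powerWeight {α γ : ℝ} (β : ℝ) (h : α - γ < 1) :
    IntegrableOn (fun x => x ^ γ * powerWeight α β x) (Ioo 0 1) := by
  have hpow : IntegrableOn (fun x : ℝ => x ^ (γ - α)) (Ioo 0 1) :=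
    ((intervalIntegrable_iff_integrableOn_Ioc_of_le zero_le_one).1
      (intervalIntegral.intervalIntegrable_rpow' (by linarith))).mono_set Ioo_subset_Ioc_self
  refine hpow.congr_fun (fun x hx => ?_) measurableSet_Ioo
  rw [powerWeight, if_pos hx.2, ← Real.rpow_add hx.1, sub_eq_add_neg]

lemma integrableOn_Ioi_min_rpow_one_mul_powerWeight {α β γ : ℝ} (hγ : 0 ≤ γ) (h : α - γ < 1)
    (hβ : 1 < β) : IntegrableOn (fun x => min (x ^ γ) 1 * powerWeight α β x) (Ioi 0) := by
  rw [← Ioo_union_Ici_eq_Ioi zero_lt_one]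
  refine IntegrableOn.union ?_ ?_
  · refine (integrableOn_Ioo_rpow_mul_powerWeight β h).congr_fun (fun x hx => ?_)
      measurableSet_Ioo
    rw [min_eq_left (Real.rpow_le_one hx.1.le hx.2.le hγ)]
  · refine (integrableOn_Ici_powerWeight α hβ).congr_fun (fun x hx => ?_) measurableSet_Ici
    rw [min_eq_right (Real.one_le_rpow hx hγ), one_mul]

lemma IntegrableOn.mul_prod {α β : Type*} [MeasurableSpace α] [MeasurableSpace β]
    {μ : Measure α} {ν : Measure β} [SFinite μ] [SFinite ν] {f : α → ℝ} {g : β → ℝ}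
    {s : Set α} {t : Set β} (hf : IntegrableOn f s μ) (hg : IntegrableOn g t ν) :
    IntegrableOn (fun p : α × β => f p.1 * g p.2) (s ×ˢ t) (μ.prod ν) := by
  rw [IntegrableOn, ← Measure.prod_restrict]
  exact Integrable.mul_prod hf hg

lemma min_sq_le_min_mul {s t : ℝ} (hs : 0 ≤ s) (ht : 0 ≤ t) (ht1 : t ≤ 1) :
    min (s ^ 2) (t ^ 2) ≤ min s 1 * t := by
  rcases le_total s 1 with hs1 | hs1
  · rw [min_eq_left hs1]
    rcases le_total s t with hst | hst
    · exact (min_le_left _ _).trans (by nlinarith)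
    · exact (min_le_right _ _).trans (by nlinarith)
  · rw [min_eq_right hs1, one_mul]
    exact (min_le_right _ _).trans (by nlinarith)

lemma sqrt_eq_rpow_quarter_sq {x : ℝ} (hx : 0 ≤ x) : √x = (x ^ (1 / 4 : ℝ)) ^ 2 := by
  rw [← Real.rpow_natCast, ← Real.rpow_mul hx, Real.sqrt_eq_rpow]
  norm_num

lemma sqrt_mul_W_le {a c : ℝ} (b d : ℝ) (ha : 0 < a) (hc : 0 ≤ c) (hc1 : c ≤ 1) :
    √a * W a b c d ≤ min (a ^ (1 / 4 : ℝ)) 1 * c ^ (1 / 4 : ℝ) := by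
  have hM : √a * W a b c d = min (min √a √b) (min √c √d) := by
    rw [W, mul_div_cancel₀ _ (Real.sqrt_pos.2 ha).ne']
  calc √a * W a b c d ≤ min √a √c := by
        rw [hM]; exact le_min ((min_le_left _ _).trans (min_le_left _ _))
          ((min_le_right _ _).trans (min_le_left _ _))
    _ = min ((a ^ (1 / 4 : ℝ)) ^ 2) ((c ^ (1 / 4 : ℝ)) ^ 2) := by
        rw [sqrt_eq_rpow_quarter_sq ha.le, sqrt_eq_rpow_quarter_sq hc]
    _ ≤ _ := min_sq_le_min_mul (by positivity) (by positivity)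
        (Real.rpow_le_one hc hc1 (by norm_num))

lemma W_nonneg (a b c d : ℝ) : 0 ≤ W a b c d := by
  unfold W
  positivity

lemma norm_sqrt_mul_W_mul_powerWeight_le (α β : ℝ) {a b c : ℝ} (d : ℝ) (ha : 0 < a)
    (hb : 0 ≤ b) (hc : 0 ≤ c) (hc1 : c ≤ 1) :
    ‖√a * W a b c d * powerWeight α β a * powerWeight α β b * powerWeight α β c‖ ≤
      min (a ^ (1 / 4 : ℝ)) 1 * powerWeight α β a *
        (powerWeight α β b * (c ^ (1 / 4 : ℝ) * powerWeight α β c)) := by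
  have hρa := powerWeight_nonneg α β ha.le
  have hρb := powerWeight_nonneg α β hb
  have hρc := powerWeight_nonneg α β hc
  have hW := W_nonneg a b c d
  rw [Real.norm_of_nonneg (by positivity)]
  calc √a * W a b c d * powerWeight α β a * powerWeight α β b * powerWeight α β c
      = √a * W a b c d * (powerWeight α β a * powerWeight α β b * powerWeight α β c) := by ring
    _ ≤ min (a ^ (1 / 4 : ℝ)) 1 * c ^ (1 / 4 : ℝ) *
          (powerWeight α β a * powerWeight α β b * powerWeight α β c) :=
        mul_le_mul_of_nonneg_right (sqrt_mul_W_le b d ha hc hc1) (by positivity)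
    _ = _ := by ring

theorem stmt_9_general (α β : ℝ) (hα : α < 5/4) (hβ : 1 < β) :
    IntegrableOn
      (fun q : ℝ × ℝ × ℝ =>
        Real.sqrt q.1 * W q.1 q.2.1 q.2.2 (q.1 + q.2.1 - q.2.2) *
          (if q.1 < 1 then q.1 ^ (-α) else q.1 ^ (-β)) *
          (if q.2.1 < 1 then q.2.1 ^ (-α) else q.2.1 ^ (-β)) *
          (if q.2.2 < 1 then q.2.2 ^ (-α) else q.2.2 ^ (-β)))
      {q : ℝ × ℝ × ℝ | 0 < q.1 ∧ 1 < q.2.1 ∧ 0 < q.2.2 ∧ q.2.2 < 1} := by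
  have hbox : {q : ℝ × ℝ × ℝ | 0 < q.1 ∧ 1 < q.2.1 ∧ 0 < q.2.2 ∧ q.2.2 < 1} =
      Ioi 0 ×ˢ (Ioi 1 ×ˢ Ioo 0 1) := by
    ext; simp
  have hdom : IntegrableOn (fun q : ℝ × ℝ × ℝ =>
      min (q.1 ^ (1 / 4 : ℝ)) 1 * powerWeight α β q.1 *
        (powerWeight α β q.2.1 * (q.2.2 ^ (1 / 4 : ℝ) * powerWeight α β q.2.2)))
      (Ioi 0 ×ˢ (Ioi 1 ×ˢ Ioo 0 1)) :=
    IntegrableOn.mul_prod (integrableOn_Ioi_min_rpow_one_mul_powerWeight (by norm_num)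
      (by linarith) hβ) <| IntegrableOn.mul_prod
        ((integrableOn_Ici_powerWeight α hβ).mono_set Ioi_subset_Ici_self)
        (integrableOn_Ioo_rpow_mul_powerWeight β (by linarith))
  have hρ := measurable_powerWeight α β
  have hW : Measurable fun q : ℝ × ℝ × ℝ => W q.1 q.2.1 q.2.2 (q.1 + q.2.1 - q.2.2) := by
    unfold W; fun_prop
  change IntegrableOn (fun q : ℝ × ℝ × ℝ => √q.1 * W q.1 q.2.1 q.2.2 (q.1 + q.2.1 - q.2.2) *
    powerWeight α β q.1 * powerWeight α β q.2.1 * powerWeight α β q.2.2) _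
  rw [hbox]
  refine hdom.mono' (by fun_prop) ((ae_restrict_iff'
    (measurableSet_Ioi.prod (measurableSet_Ioi.prod measurableSet_Ioo))).2 (.of_forall ?_))
  rintro ⟨a, b, c⟩ ⟨ha, hb, hc0, hc1⟩
  exact norm_sqrt_mul_W_mul_powerWeight_le α β _ ha (zero_lt_one.trans hb).le hc0.le hc1.le

/-- Locality of the flux integral J₃(ρ)(1) for the weight
ρ(ω) = ω^{-α}1_{ω<1} + ω^{-β}1_{ω>1} with 0 ≤ α < 5/4, β > 1; here q = (ω₁,ω₂,ω₃)
and ω₄ = ω₁+ω₂−ω₃. -/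
theorem stmt_9 (α β : ℝ) (hα0 : 0 ≤ α) (hα : α < 5/4) (hβ : 1 < β) :
    IntegrableOn
      (fun q : ℝ × ℝ × ℝ =>
        Real.sqrt q.1 * W q.1 q.2.1 q.2.2 (q.1 + q.2.1 - q.2.2) *
          (if q.1 < 1 then q.1 ^ (-α) else q.1 ^ (-β)) *
          (if q.2.1 < 1 then q.2.1 ^ (-α) else q.2.1 ^ (-β)) *
          (if q.2.2 < 1 then q.2.2 ^ (-α) else q.2.2 ^ (-β)))
      {q : ℝ × ℝ × ℝ | 0 < q.1 ∧ 1 < q.2.1 ∧ 0 < q.2.2 ∧ q.2.2 < 1} :=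
  stmt_9_general α β hα hβ
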